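/- With the notation of the context, for every 0 ≤ i ≤ ⌊d/2⌋, the coefficient a'_i of t^i in a'(t) satisfies a'_i = (p_0 + p_n + p_{2n} + ⋯ + p_{in}) − (p_{n−1} + p_{2n−1} + ⋯ + p_{in−1}). -/

import Mathlib

open Polynomial

/-- `ehrG d p m = ∑_{i=0}^{d} p_i * C(m+d-i, d)`, the value at `m` of the polynomial `g`
associated to `p` by `p(t)/(1-t)^(d+1) = ∑_{m ≥ 0} g(m) tᵐ`. -/
def ehrG (d : ℕ) (p : Polynomial ℤ) (m : ℕ) : ℤ :=
  ∑ i ∈ Finset.range (d + 1), p.coeff i * ((m + d - i).choose d : ℤ)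

/-- The polynomial `1 + t + ⋯ + t^{n-1}`. -/
noncomputable def geomPoly (n : ℕ) : Polynomial ℤ :=
  ∑ j ∈ Finset.range n, X ^ j

/-!
Write `G = 1 + t + ⋯ + t^{n-1}`. Since `G (1 - t) = 1 - tⁿ`, we have
`h/(1-t)^{d+1} = h G^{d+1}/(1-tⁿ)^{d+1}`, and reading off the coefficients of `t^{nm}` shows that
`U_n h` is the contraction of `h G^{d+1}`: its `j`-th coefficient is the `(jn)`-th one of `h G^{d+1}`.

If `f = a + b` with `a` palindromic of degree `d` and `b` palindromic of degree `d + 1`, then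
`(1 - t) a = f - t^{d+1} f(1/t)`. This applies to `U_n h = a' + b'` and, since `G` is
palindromic, to `h G^{d+1} = p + b G^{d+1}` with `d + 1` replaced by `n(d+1)`. Contraction commutes
with these reflections, so `(1 - t) a'` is the contraction of `(1 - t) p`, and summing the
coefficients of `(1 - t) a'` up to `tⁱ` gives `a'_i`.
-/

open scoped PowerSeries

namespace Polynomial

theorem revAt_mul_right {n : ℕ} (hn : n ≠ 0) (m j : ℕ) :
    revAt (m * n) (j * n) = revAt m j * n := by
  rcases le_or_gt j m with h | h
  · rw [revAt_le h, revAt_le (Nat.mul_le_mul_right n h), Nat.sub_mul]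
  · rw [revAt_eq_self_of_lt h,
      revAt_eq_self_of_lt (Nat.mul_lt_mul_of_pos_right h (Nat.pos_of_ne_zero hn))]

variable {R : Type*}

section Semiring
variable [Semiring R]

theorem reflect_eq_self_of_coeff_symm {N : ℕ} {f : R[X]}
    (hf : ∀ i ≤ N, f.coeff i = f.coeff (N - i)) : f.reflect N = f := by
  ext i
  rw [coeff_reflect]
  rcases le_or_gt i N with hi | hi
  · rw [revAt_le hi, hf i hi]
  · rw [revAt_eq_self_of_lt hi]

theorem reflect_pow_eq_self {N : ℕ} {f : R[X]} (hdeg : f.natDegree ≤ N) (hf : f.reflect N = f)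
    (e : ℕ) : (f ^ e).reflect (e * N) = f ^ e := by
  induction e with
  | zero => simp
  | succ e ih =>
    rw [pow_succ, Nat.succ_mul, reflect_mul _ _ (natDegree_pow_le_of_le e hdeg) hdeg, ih, hf]

end Semiring

section CommSemiring
variable [CommSemiring R]

theorem reflect_contract {n : ℕ} (hn : n ≠ 0) (m : ℕ) (f : R[X]) :
    (contract n f).reflect m = contract n (f.reflect (m * n)) := by
  ext j
  rw [coeff_reflect, coeff_contract hn, coeff_contract hn, coeff_reflect, revAt_mul_right hn]

end CommSemiring

section CommRing
variable [CommRing R]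

theorem contract_sub {n : ℕ} (hn : n ≠ 0) (f g : R[X]) :
    contract n (f - g) = contract n f - contract n g := by
  ext
  simp only [coeff_sub, coeff_contract hn]

theorem coeff_eq_sum_coeff_one_sub_X_mul (f : R[X]) (i : ℕ) :
    f.coeff i = ∑ j ∈ Finset.range (i + 1), ((1 - X) * f).coeff j := by
  induction i with
  | zero => simp [sub_mul]
  | succ i ih =>
    rw [Finset.sum_range_succ, ← ih, sub_mul, one_mul, coeff_sub, coeff_X_mul]
    abel

theorem sum_range_coeff_one_sub_X_mul_at_multiples {n : ℕ} (hn : n ≠ 0) (f : R[X]) (i : ℕ) :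
    ∑ j ∈ Finset.range (i + 1), ((1 - X) * f).coeff (j * n) =
      ∑ j ∈ Finset.range (i + 1), f.coeff (j * n) -
        ∑ j ∈ Finset.range i, f.coeff ((j + 1) * n - 1) := by
  have hshift (j : ℕ) : (X * f).coeff ((j + 1) * n) = f.coeff ((j + 1) * n - 1) := by
    rw [← Nat.sub_add_cancel (Nat.one_le_iff_ne_zero.mpr (Nat.mul_ne_zero j.succ_ne_zero hn)),
      coeff_X_mul, Nat.add_sub_cancel]
  have hXf : ∑ j ∈ Finset.range (i + 1), (X * f).coeff (j * n) =
      ∑ j ∈ Finset.range i, f.coeff ((j + 1) * n - 1) := by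
    rw [Finset.sum_range_succ', zero_mul, coeff_X_mul_zero, add_zero]
    exact Finset.sum_congr rfl fun j _ => hshift j
  simp only [sub_mul, one_mul, coeff_sub, Finset.sum_sub_distrib, hXf]

theorem one_sub_X_mul_eq_sub_reflect {D : ℕ} {a b : R[X]} (ha : a.natDegree ≤ D)
    (ha' : a.reflect D = a) (hb : b.reflect (D + 1) = b) :
    (1 - X) * a = (a + b) - (a + b).reflect (D + 1) := by
  have : a.reflect (D + 1) = a * X := by
    simpa [ha'] using reflect_mul a 1 ha (natDegree_one.trans_le zero_le_one)
  rw [reflect_add, hb, this]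
  ring

end CommRing

end Polynomial

namespace PowerSeries

variable {R : Type*} [CommRing R]

-- The coefficientwise form of `Polynomial.contract_mul_expand`, with the same proof.
theorem coeff_coe_mul_expand {n : ℕ} (hn : n ≠ 0) (f : R[X]) (g : R⟦X⟧) (m : ℕ) :
    coeff (m * n) ((f : R⟦X⟧) * expand n hn g) = coeff m ((f.contract n : R⟦X⟧) * g) := by
  have hn' := Nat.pos_of_ne_zero hn
  rw [coeff_mul, coeff_mul, ← Finset.sum_subset
    (s₁ := (Finset.HasAntidiagonal.antidiagonal m).image fun x ↦ (x.1 * n, x.2 * n)),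
    Finset.sum_image]
  · simp_rw [Polynomial.coeff_coe, coeff_contract hn, mul_comm _ n, coeff_expand_mul]
  · intro x _ y _ eq
    simpa only [Prod.ext_iff, Nat.mul_right_cancel_iff hn'] using eq
  · simp_rw [Finset.subset_iff, Finset.mem_image, Finset.HasAntidiagonal.mem_antidiagonal]
    rintro _ ⟨x, rfl, rfl⟩
    simp_rw [add_mul]
  simp_rw [Finset.mem_image, Finset.HasAntidiagonal.mem_antidiagonal]
  intro ⟨x, y⟩ eq nex
  by_cases h : n ∣ y
  · obtain ⟨x, rfl⟩ : n ∣ x := (Nat.dvd_add_iff_left h).mpr (eq ▸ dvd_mul_left n m)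
    obtain ⟨y, rfl⟩ := h
    refine (nex ⟨⟨x, y⟩, (Nat.mul_right_cancel_iff hn').mp ?_, by simp_rw [mul_comm]⟩).elim
    rw [← eq, mul_comm, mul_add]
  · rw [coeff_expand_of_not_dvd n hn g h, mul_zero]

end PowerSeries

theorem coeff_geomPoly (n i : ℕ) : (geomPoly n).coeff i = if i < n then 1 else 0 := by
  simp [geomPoly, coeff_X_pow]

theorem natDegree_geomPoly_le (n : ℕ) : (geomPoly n).natDegree ≤ n - 1 :=
  natDegree_sum_le_of_forall_le _ _ fun i hi =>
    (natDegree_X_pow_le i).trans (by simp at hi; omega)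

theorem reflect_geomPoly (n : ℕ) : (geomPoly n).reflect (n - 1) = geomPoly n := by
  ext i
  rw [coeff_reflect, coeff_geomPoly, coeff_geomPoly]
  rcases le_or_gt i (n - 1) with hi | hi
  · rw [revAt_le hi]
    split_ifs <;> omega
  · rw [revAt_eq_self_of_lt hi]

theorem geomPoly_mul_one_sub_X (n : ℕ) : geomPoly n * (1 - X) = 1 - X ^ n :=
  geom_sum_mul_neg X n

theorem ehrG_eq_coeff_mul_invOneSubPow {d : ℕ} {f : ℤ[X]} (hf : f.natDegree ≤ d) (m : ℕ) :
    ehrG d f m =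
      PowerSeries.coeff m ((f : ℤ⟦X⟧) * (PowerSeries.invOneSubPow ℤ (d + 1) : ℤ⟦X⟧)) := by
  rw [← eval₂_C_X_eq_coe, eval₂_eq_sum_range' _ (Nat.lt_succ_of_le hf), Finset.sum_mul, map_sum,
    ehrG]
  refine Finset.sum_congr rfl fun i hi => ?_
  rw [Finset.mem_range] at hi
  rw [mul_assoc, PowerSeries.coeff_C_mul, PowerSeries.coeff_X_pow_mul',
    PowerSeries.invOneSubPow_val_succ_eq_mk_add_choose, PowerSeries.coeff_mk]
  split_ifs with him
  · rw [show m + d - i = d + (m - i) by omega]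
  · rw [Nat.choose_eq_zero_of_lt (by omega), Nat.cast_zero, mul_zero]

theorem eq_contract_of_ehrG_eq {d n : ℕ} (hn : n ≠ 0) {h U : ℤ[X]} (hh : h.natDegree ≤ d)
    (hU : U.natDegree ≤ d) (hUh : ∀ m, ehrG d U m = ehrG d h (n * m)) :
    U = contract n (h * geomPoly n ^ (d + 1)) := by
  set S := PowerSeries.invOneSubPow ℤ (d + 1)
  set E := PowerSeries.expand n hn (S : ℤ⟦X⟧)
  have hS : (S : ℤ⟦X⟧) * (1 - PowerSeries.X) ^ (d + 1) = 1 := by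
    rw [← PowerSeries.invOneSubPow_inv_eq_one_sub_pow]
    exact S.val_inv
  have hG : (geomPoly n : ℤ⟦X⟧) * (1 - PowerSeries.X) = 1 - PowerSeries.X ^ n := by
    simpa using congrArg ((↑) : ℤ[X] → ℤ⟦X⟧) (geomPoly_mul_one_sub_X n)
  have hE : E * ((geomPoly n : ℤ⟦X⟧) * (1 - PowerSeries.X)) ^ (d + 1) = 1 := by
    simpa [hG] using congrArg (PowerSeries.expand n hn) hS
  rw [mul_pow] at hE
  have hhS : (h : ℤ⟦X⟧) * S = ↑(h * geomPoly n ^ (d + 1)) * E := by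
    push_cast
    linear_combination -(h : ℤ⟦X⟧) * S * hE + (h : ℤ⟦X⟧) * (geomPoly n : ℤ⟦X⟧) ^ (d + 1) * E * hS
  refine Polynomial.coe_inj.mp (S.isUnit.mul_left_injective ?_)
  ext m
  rw [← ehrG_eq_coeff_mul_invOneSubPow hU, hUh, ehrG_eq_coeff_mul_invOneSubPow hh, hhS,
    mul_comm n m, PowerSeries.coeff_coe_mul_expand]

theorem stmt16_general (d n : ℕ) (hn : 0 < n)
    (h Uh a b a' b' : Polynomial ℤ)
    (hdeg : h.natDegree ≤ d)
    (hUdeg : Uh.natDegree ≤ d)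
    (hU : ∀ m : ℕ, ehrG d Uh m = ehrG d h (n * m))
    -- h = a + b, the symmetric decomposition of h
    (hab : h = a + b)
    (hadeg : a.natDegree ≤ d) (hbdeg : b.natDegree ≤ d + 1)
    (hasym : ∀ i ≤ d, a.coeff i = a.coeff (d - i))
    (hbsym : ∀ i ≤ d + 1, b.coeff i = b.coeff (d + 1 - i))
    -- U_n h = a' + b', the symmetric decomposition of U_n h
    (hab' : Uh = a' + b')
    (ha'deg : a'.natDegree ≤ d)
    (ha'sym : ∀ i ≤ d, a'.coeff i = a'.coeff (d - i))
    (hb'sym : ∀ i ≤ d + 1, b'.coeff i = b'.coeff (d + 1 - i)) :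
    -- a'_i = (p_0 + p_n + ⋯ + p_{in}) − (p_{n-1} + p_{2n-1} + ⋯ + p_{in-1}),
    -- where p = a(t)(1 + t + ⋯ + t^{n-1})^{d+1}
    ∀ i ≤ d / 2,
      a'.coeff i =
        (∑ j ∈ Finset.range (i + 1), (a * geomPoly n ^ (d + 1)).coeff (j * n)) -
          ∑ j ∈ Finset.range i, (a * geomPoly n ^ (d + 1)).coeff ((j + 1) * n - 1) := by
  intro i _
  set Q := geomPoly n ^ (d + 1)
  have hQdeg : Q.natDegree ≤ (d + 1) * (n - 1) :=
    natDegree_pow_le_of_le _ (natDegree_geomPoly_le n)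
  have hQ : Q.reflect ((d + 1) * (n - 1)) = Q :=
    reflect_pow_eq_self (natDegree_geomPoly_le n) (reflect_geomPoly n) _
  obtain ⟨N, hN, hdN⟩ : ∃ N, (d + 1) * n = N + 1 ∧ d + (d + 1) * (n - 1) = N :=
    ⟨d + (d + 1) * (n - 1), by cases n <;> grind⟩
  have hP : (1 - X) * (a * Q) = h * Q - (h * Q).reflect ((d + 1) * n) := by
    rw [hab, add_mul, hN]
    refine one_sub_X_mul_eq_sub_reflect (hdN ▸ natDegree_mul_le_of_le hadeg hQdeg) ?_ ?_
    · rw [← hdN, reflect_mul _ _ hadeg hQdeg, reflect_eq_self_of_coeff_symm hasym, hQ]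
    · rw [← hdN, add_right_comm, reflect_mul _ _ hbdeg hQdeg,
        reflect_eq_self_of_coeff_symm hbsym, hQ]
  have ha' : (1 - X) * a' = contract n ((1 - X) * (a * Q)) := by
    rw [hP, contract_sub hn.ne', ← reflect_contract hn.ne',
      ← eq_contract_of_ehrG_eq hn.ne' hdeg hUdeg hU, hab']
    exact one_sub_X_mul_eq_sub_reflect ha'deg (reflect_eq_self_of_coeff_symm ha'sym)
      (reflect_eq_self_of_coeff_symm hb'sym)
  rw [coeff_eq_sum_coeff_one_sub_X_mul, ha']
  simp only [coeff_contract hn.ne']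
  exact sum_range_coeff_one_sub_X_mul_at_multiples hn.ne' _ i

theorem stmt16 (d n : ℕ) (hd : 0 < d) (hn : 0 < n)
    (h Uh a b a' b' : Polynomial ℤ)
    (hdeg : h.natDegree ≤ d)
    (hUdeg : Uh.natDegree ≤ d)
    (hU : ∀ m : ℕ, ehrG d Uh m = ehrG d h (n * m))
    -- h = a + b, the symmetric decomposition of h
    (hab : h = a + b)
    (hadeg : a.natDegree ≤ d) (hbdeg : b.natDegree ≤ d + 1)
    (hasym : ∀ i ≤ d, a.coeff i = a.coeff (d - i))
    (hbsym : ∀ i ≤ d + 1, b.coeff i = b.coeff (d + 1 - i))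
    -- U_n h = a' + b', the symmetric decomposition of U_n h
    (hab' : Uh = a' + b')
    (ha'deg : a'.natDegree ≤ d) (hb'deg : b'.natDegree ≤ d + 1)
    (ha'sym : ∀ i ≤ d, a'.coeff i = a'.coeff (d - i))
    (hb'sym : ∀ i ≤ d + 1, b'.coeff i = b'.coeff (d + 1 - i)) :
    -- a'_i = (p_0 + p_n + ⋯ + p_{in}) − (p_{n-1} + p_{2n-1} + ⋯ + p_{in-1}),
    -- where p = a(t)(1 + t + ⋯ + t^{n-1})^{d+1}
    ∀ i ≤ d / 2,
      a'.coeff i =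
        (∑ j ∈ Finset.range (i + 1), (a * geomPoly n ^ (d + 1)).coeff (j * n)) -
          ∑ j ∈ Finset.range i, (a * geomPoly n ^ (d + 1)).coeff ((j + 1) * n - 1) :=
  stmt16_general d n hn h Uh a b a' b' hdeg hUdeg hU hab hadeg hbdeg hasym hbsym hab' ha'deg ha'sym
    hb'sym
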